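/- arXiv:1102.4268 — 2 statements merged into one kernel-verified Lean document; each statement's English description precedes it below -/
import Mathlib

section
/- There exists a constant C > 0 such that for every natural number N ≥ 1, the discrete convolution sum ∑_{k=0}^{N-1} 1/((N-k)·ln²(N-k+e)) · 1/((k+1)·ln²(k+1+e)) is bounded by C/((N+1)·ln²(N+e)). -/
/-!
The weight `w x = 1 / (x * log² (x + e))` (`logSqWeight`) is positive and decreasing on `(0, ∞)`.
In each term `w (N - k) * w (k + 1)` one of the two arguments is at least `(N + 1) / 2`, so the term is at most
`w ((N + 1) / 2) * (w (N - k) + w (k + 1))`, and `w ((N + 1) / 2) = O(1 / ((N + 1) log² (N + e)))`.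
Summing, it remains to bound `∑ w (k + 1)` uniformly, which follows from the telescoping estimate
`w (x + 1) ≤ (1 + e) * (1 / log (x + e) - 1 / log (x + 1 + e))`.
-/

open Real Finset

noncomputable def logSqWeight (x : ℝ) : ℝ := 1 / (x * log (x + exp 1) ^ 2)

lemma one_le_log_add_exp_one {x : ℝ} (hx : 0 ≤ x) : 1 ≤ log (x + exp 1) := by
  simpa using log_le_log (exp_pos 1) (by linarith : exp 1 ≤ x + exp 1)

lemma logSqWeight_nonneg {x : ℝ} (hx : 0 < x) : 0 ≤ logSqWeight x := by
  have := one_le_log_add_exp_one hx.le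
  unfold logSqWeight; positivity

lemma logSqWeight_antitoneOn : AntitoneOn logSqWeight (Set.Ioi 0) := by
  intro x (hx : 0 < x) y (hy : 0 < y) hxy
  have hLx := one_le_log_add_exp_one hx.le
  have hLxy : log (x + exp 1) ≤ log (y + exp 1) :=
    log_le_log (by positivity) (by linarith)
  unfold logSqWeight
  gcongr

lemma logSqWeight_add_one_le {x : ℝ} (hx : 0 ≤ x) :
    logSqWeight (x + 1) ≤
      (1 + exp 1) * (1 / log (x + exp 1) - 1 / log (x + 1 + exp 1)) := by
  set L₁ := log (x + exp 1)
  set L₂ := log (x + 1 + exp 1)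
  have he : 0 < exp 1 := exp_pos 1
  have hL₁ : 1 ≤ L₁ := one_le_log_add_exp_one hx
  have hL₁₂ : L₁ ≤ L₂ := log_le_log (by positivity) (by linarith)
  have hL₂ : 0 < L₂ := by linarith
  have hgap : 1 / (x + 1 + exp 1) ≤ L₂ - L₁ := by
    have := one_sub_inv_le_log_of_pos (by positivity : 0 < (x + 1 + exp 1) / (x + exp 1))
    rw [log_div (by positivity) (by positivity), inv_div] at this
    convert this using 1
    field_simp
    ring
  calc logSqWeight (x + 1)
      ≤ (1 + exp 1) * (1 / ((x + 1 + exp 1) * L₂ ^ 2)) := by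
        unfold logSqWeight
        rw [mul_one_div, div_le_div_iff₀ (by positivity) (by positivity)]
        nlinarith [mul_nonneg (mul_nonneg he.le hx) (sq_nonneg L₂)]
    _ ≤ (1 + exp 1) * ((L₂ - L₁) / (L₁ * L₂)) := by
        refine mul_le_mul_of_nonneg_left ?_ (by positivity)
        rw [div_le_iff₀ (by positivity)] at hgap
        rw [div_le_div_iff₀ (by positivity) (by positivity)]
        nlinarith
    _ = (1 + exp 1) * (1 / L₁ - 1 / L₂) := by
        field_simp

lemma sum_range_logSqWeight_le (N : ℕ) :
    ∑ k ∈ range N, logSqWeight ((k : ℝ) + 1) ≤ 1 + exp 1 := by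
  have htelescope := sum_range_sub' (fun k : ℕ ↦ 1 / log ((k : ℝ) + exp 1)) N
  push_cast at htelescope
  have hN := one_le_log_add_exp_one (Nat.cast_nonneg (α := ℝ) N)
  calc ∑ k ∈ range N, logSqWeight ((k : ℝ) + 1)
      ≤ ∑ k ∈ range N, (1 + exp 1) *
          (1 / log ((k : ℝ) + exp 1) - 1 / log ((k : ℝ) + 1 + exp 1)) :=
        sum_le_sum fun k _ ↦ logSqWeight_add_one_le (Nat.cast_nonneg k)
    _ = (1 + exp 1) * (1 - 1 / log ((N : ℝ) + exp 1)) := by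
        rw [← mul_sum, htelescope, zero_add, log_exp, div_one]
    _ ≤ 1 + exp 1 := by
        have : 0 ≤ 1 / log ((N : ℝ) + exp 1) := by positivity
        nlinarith [exp_pos 1]

lemma logSqWeight_half_le {y : ℝ} (hy : 0 ≤ y) :
    logSqWeight ((y + 1) / 2) ≤ 8 / ((y + 1) * log (y + exp 1) ^ 2) := by
  unfold logSqWeight
  set L := log ((y + 1) / 2 + exp 1)
  set M := log (y + exp 1)
  have he : 2 < exp 1 := by linarith [exp_one_gt_d9]
  have hL : 1 ≤ L := one_le_log_add_exp_one (by positivity)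
  have hM : 1 ≤ M := one_le_log_add_exp_one hy
  have hML : M ≤ 2 * L := by
    have := log_le_log (by positivity) (by nlinarith : y + exp 1 ≤ ((y + 1) / 2 + exp 1) ^ 2)
    rwa [log_pow, Nat.cast_ofNat] at this
  have hM₂ : M ^ 2 ≤ 4 * L ^ 2 := by nlinarith
  rw [div_le_div_iff₀ (by positivity) (by positivity)]
  nlinarith [mul_le_mul_of_nonneg_left hM₂ (by positivity : (0 : ℝ) ≤ y + 1)]

lemma sum_range_mul_reflect_le {f : ℝ → ℝ} (hf : AntitoneOn f (Set.Ioi 0))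
    (hf₀ : ∀ x, 0 < x → 0 ≤ f x) (N : ℕ) :
    ∑ k ∈ range N, f ((N : ℝ) - k) * f ((k : ℝ) + 1) ≤
      2 * f (((N : ℝ) + 1) / 2) * ∑ k ∈ range N, f ((k : ℝ) + 1) := by
  set B := f (((N : ℝ) + 1) / 2)
  have hhalf : (0 : ℝ) < ((N : ℝ) + 1) / 2 := by positivity
  have hB : ∀ x, ((N : ℝ) + 1) / 2 ≤ x → f x ≤ B := fun x hx ↦
    hf hhalf (show 0 < x by linarith) hx
  have hterm : ∀ k ∈ range N,
      f ((N : ℝ) - k) * f ((k : ℝ) + 1) ≤ B * (f ((N : ℝ) - k) + f ((k : ℝ) + 1)) := by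
    intro k hk
    have hkN : (k : ℝ) + 1 ≤ N := by exact_mod_cast mem_range.mp hk
    have ha := hf₀ ((N : ℝ) - k) (by linarith)
    have hb := hf₀ ((k : ℝ) + 1) (by positivity)
    -- the two arguments add up to `N + 1`
    rcases le_total (((N : ℝ) + 1) / 2) ((N : ℝ) - k) with h | h
    · nlinarith [hB _ h]
    · nlinarith [hB ((k : ℝ) + 1) (by linarith)]
  have hreflect : ∑ k ∈ range N, f ((N : ℝ) - k) = ∑ k ∈ range N, f ((k : ℝ) + 1) := by
    rw [← sum_range_reflect (fun k : ℕ ↦ f ((k : ℝ) + 1)) N]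
    refine sum_congr rfl fun k hk ↦ ?_
    have hk := mem_range.mp hk
    rw [Nat.cast_sub (by omega), Nat.cast_sub (by omega)]
    push_cast
    ring_nf
  calc ∑ k ∈ range N, f ((N : ℝ) - k) * f ((k : ℝ) + 1)
      ≤ ∑ k ∈ range N, B * (f ((N : ℝ) - k) + f ((k : ℝ) + 1)) := sum_le_sum hterm
    _ = 2 * B * ∑ k ∈ range N, f ((k : ℝ) + 1) := by
        rw [← mul_sum, sum_add_distrib, hreflect]
        ring

/-- Discrete convolution bound: there is `C > 0` such that for all `N ≥ 1`,
`∑_{k=0}^{N-1} 1/((N-k)·ln²(N-k+e)) · 1/((k+1)·ln²(k+1+e)) ≤ C/((N+1)·ln²(N+e))`. -/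
theorem discrete_convolution_bound :
    ∃ C : ℝ, 0 < C ∧ ∀ N : ℕ, 1 ≤ N →
      ∑ k ∈ Finset.range N,
          (1 / (((N : ℝ) - k) * (Real.log ((N : ℝ) - k + Real.exp 1)) ^ 2)) *
          (1 / (((k : ℝ) + 1) * (Real.log ((k : ℝ) + 1 + Real.exp 1)) ^ 2))
        ≤ C / (((N : ℝ) + 1) * (Real.log ((N : ℝ) + Real.exp 1)) ^ 2) := by
  refine ⟨16 * (1 + exp 1), by positivity, fun N _ ↦ ?_⟩
  have hB := logSqWeight_half_le (Nat.cast_nonneg (α := ℝ) N)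
  have hB₀ := logSqWeight_nonneg (show (0 : ℝ) < ((N : ℝ) + 1) / 2 by positivity)
  have hS := sum_range_logSqWeight_le N
  have hS₀ : 0 ≤ ∑ k ∈ range N, logSqWeight ((k : ℝ) + 1) :=
    sum_nonneg fun k _ ↦ logSqWeight_nonneg (by positivity)
  calc ∑ k ∈ range N, logSqWeight ((N : ℝ) - k) * logSqWeight ((k : ℝ) + 1)
      ≤ 2 * logSqWeight (((N : ℝ) + 1) / 2) * ∑ k ∈ range N, logSqWeight ((k : ℝ) + 1) :=
        sum_range_mul_reflect_le logSqWeight_antitoneOn (fun _ ↦ logSqWeight_nonneg) N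
    _ ≤ 2 * (8 / (((N : ℝ) + 1) * log ((N : ℝ) + exp 1) ^ 2)) * (1 + exp 1) := by gcongr
    _ = 16 * (1 + exp 1) / (((N : ℝ) + 1) * log ((N : ℝ) + exp 1) ^ 2) := by ring
end

section
/- Let H be a Banach space, T ≥ 2, T₁ ∈ (0,T), and let V : [0,∞) → ℒ(H), S ∈ ℒ(H), ψ ∈ ℒ(H) be such that S = ψS = Sψ, ‖ψV(t)ψ‖ ≤ C₀/((t+1)·ln²(t+e)) for all t ≥ 0, and ‖S‖ ≤ M. Define recursively B⁰₁ = S and operators by: U(NT) ψ := V(NT)ψ + ∑_{k=0}^{N-1} V(kT + T - T₁) B_N^k where B_{N+1}^k = B_N^{k-1} for 1 ≤ k ≤ N and B⁰_{N+1} = ∑_{k=0}^{N-1} Sψ V(kT+T-T₁)ψ B_N^k + SψV(NT)ψ. Then if each B_N^k satisfies ψB_N^k = B_N^k and ‖B_N^k‖ ≤ C/((N-k)·ln²(N-k+e)) for a suitable constant C, and T is chosen large enough (depending only on C₀, M and the convolution constant), then B⁰_{N+1} satisfies ψ B⁰_{N+1} = B⁰_{N+1} and ‖B⁰_{N+1}‖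 ≤ C/((N+1)·ln²(N+1+e)). -/
/-!
Write `w x = x log² (x + e)`. Once `T ≥ 2T₁`, each time `t` at which the kernel is evaluated
(`kT + T - T₁`, resp. `NT`) satisfies `s ≤ t` and `(T/2) s ≤ t + 1` for `s = k + 1`, resp. `N + 1`,
so there the kernel is at most `(2C₀/T) / w(s)` and
`‖B⁰_{N+1}‖ ≤ (2MC₀/T) (C ∑ₖ 1/(w(k+1) w(N-k)) + 1/w(N+1))`.
The convolution is at most `160 / w(N+1)`: one of `k + 1`, `N - k` is at least `(N+1)/2`,
which gives `w(N+1) ≤ 8 (w(k+1) + w(N-k))`, and `∑ 1/w(j+1) ≤ 10` because `1/w(x)` is dominated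
by the telescoping differences of `10 / log (x + e)`. Taking `T ≥ 2MC₀(160C+1)/C` closes the
induction.
-/

open Real Finset

noncomputable def logWeight (x : ℝ) : ℝ := x * log (x + exp 1) ^ 2

lemma logWeight_nonneg {x : ℝ} (hx : 0 ≤ x) : 0 ≤ logWeight x := by
  unfold logWeight; positivity

lemma logWeight_pos {x : ℝ} (hx : 0 < x) : 0 < logWeight x := by
  have := one_le_log_add_exp_one hx.le
  unfold logWeight; positivity

lemma log_add_exp_one_le_two_mul {s x : ℝ} (hs : 0 ≤ s) (hx : 0 ≤ x) (hsx : s ≤ 2 * x + 1) :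
    log (s + exp 1) ≤ 2 * log (x + exp 1) := by
  have he := exp_one_gt_d9
  calc log (s + exp 1) ≤ log ((x + exp 1) ^ 2) := log_le_log (by positivity) (by nlinarith)
    _ = 2 * log (x + exp 1) := by rw [log_pow]; norm_num

lemma logWeight_le_eight_mul {s x : ℝ} (hs : 0 ≤ s) (hsx : s ≤ 2 * x) :
    logWeight s ≤ 8 * logWeight x := by
  have hlog := log_add_exp_one_le_two_mul hs (by linarith) (by linarith)
  have hsq : log (s + exp 1) ^ 2 ≤ 4 * log (x + exp 1) ^ 2 := by
    nlinarith [one_le_log_add_exp_one hs]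
  calc logWeight s ≤ (2 * x) * (4 * log (x + exp 1) ^ 2) := by
        unfold logWeight; gcongr; linarith
    _ = 8 * logWeight x := by unfold logWeight; ring

lemma logWeight_add_le {a b : ℝ} (ha : 0 ≤ a) (hb : 0 ≤ b) :
    logWeight (a + b) ≤ 8 * (logWeight a + logWeight b) := by
  have hwa := logWeight_nonneg ha
  have hwb := logWeight_nonneg hb
  rcases le_total b a with hab | hab
  · linarith [logWeight_le_eight_mul (add_nonneg ha hb) (x := a) (by linarith)]
  · linarith [logWeight_le_eight_mul (add_nonneg ha hb) (x := b) (by linarith)]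

lemma inv_logWeight_le_sub {x : ℝ} (hx : 1 ≤ x) :
    (logWeight x)⁻¹ ≤ 10 * ((log (x + exp 1))⁻¹ - (log (x + 1 + exp 1))⁻¹) := by
  have he := exp_one_lt_d9
  have hpos : 0 < x + exp 1 := by positivity
  have hA : 1 ≤ log (x + exp 1) := one_le_log_add_exp_one (by linarith)
  have hAB : log (x + 1 + exp 1) ≤ 2 * log (x + exp 1) :=
    log_add_exp_one_le_two_mul (by linarith) (by linarith) (by linarith)
  have hgap : 1 ≤ (log (x + 1 + exp 1) - log (x + exp 1)) * (x + 1 + exp 1) := by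
    have := one_sub_inv_le_log_of_pos
      (div_pos (by linarith) hpos : 0 < (x + 1 + exp 1) / (x + exp 1))
    rw [log_div (by linarith) hpos.ne', inv_div] at this
    rw [← div_le_iff₀ (by linarith)]
    refine le_of_eq_of_le ?_ this
    field_simp
    ring
  set A := log (x + exp 1)
  set B := log (x + 1 + exp 1)
  have hgap' : 1 ≤ 5 * x * (B - A) := by nlinarith
  have hA0 : 0 < A := by linarith
  have hB0 : 0 < B := by nlinarith
  rw [inv_sub_inv hA0.ne' hB0.ne', ← mul_div_assoc, le_div_iff₀ (by positivity),
    logWeight, inv_mul_le_iff₀ (by positivity)]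
  nlinarith [mul_le_mul_of_nonneg_left hgap' (sq_nonneg A),
    mul_le_mul_of_nonneg_left hAB (by positivity : 0 ≤ A)]

lemma sum_range_inv_logWeight_le (N : ℕ) : ∑ j ∈ range N, (logWeight (j + 1))⁻¹ ≤ 10 := by
  set F : ℕ → ℝ := fun j => (log (j + 1 + exp 1))⁻¹
  have hF0 : F 0 ≤ 1 := inv_le_one_of_one_le₀ (one_le_log_add_exp_one (by norm_num))
  have hFN : 0 ≤ F N :=
    inv_nonneg.mpr (by linarith [one_le_log_add_exp_one (by positivity : (0 : ℝ) ≤ N + 1)])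
  calc ∑ j ∈ range N, (logWeight (j + 1))⁻¹ ≤ ∑ j ∈ range N, 10 * (F j - F (j + 1)) := by
        refine sum_le_sum fun j _ => ?_
        have hj : (1 : ℝ) ≤ j + 1 := by linarith [(Nat.cast_nonneg j : (0 : ℝ) ≤ j)]
        simpa [F] using inv_logWeight_le_sub hj
    _ = 10 * (F 0 - F N) := by rw [← mul_sum, sum_range_sub']
    _ ≤ 10 := by linarith

lemma sum_range_inv_logWeight_mul_le (N : ℕ) :
    ∑ k ∈ range N, (logWeight (k + 1) * logWeight (N - k))⁻¹ ≤ 160 / logWeight (N + 1) := by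
  have hG : 0 < logWeight (N + 1) := logWeight_pos (by positivity)
  have hsplit : ∀ k ∈ range N, (logWeight (k + 1) * logWeight (N - k))⁻¹ ≤
      8 / logWeight (N + 1) * ((logWeight (k + 1))⁻¹ + (logWeight (N - k))⁻¹) := by
    intro k hk
    have hkN : (k : ℝ) + 1 ≤ N := by exact_mod_cast mem_range.mp hk
    have ha := logWeight_pos (by positivity : (0 : ℝ) < k + 1)
    have hb := logWeight_pos (by linarith : (0 : ℝ) < N - k)
    have hadd := logWeight_add_le (a := k + 1) (b := N - k) (by positivity) (by linarith)
    rw [show (k : ℝ) + 1 + (N - k) = N + 1 by ring] at hadd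
    rw [inv_add_inv ha.ne' hb.ne', mul_div_assoc', div_mul_eq_mul_div, div_div, inv_eq_one_div,
      div_le_div_iff₀ (by positivity) (by positivity)]
    nlinarith [mul_pos ha hb]
  have hreflect :
      ∑ k ∈ range N, (logWeight (N - k))⁻¹ = ∑ k ∈ range N, (logWeight (k + 1))⁻¹ := by
    rw [← sum_range_reflect]
    refine sum_congr rfl fun k hk => ?_
    have hkN := mem_range.mp hk
    rw [Nat.cast_sub (by omega), Nat.cast_sub (by omega)]
    push_cast
    ring_nf
  calc ∑ k ∈ range N, (logWeight (k + 1) * logWeight (N - k))⁻¹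
      ≤ ∑ k ∈ range N,
          8 / logWeight (N + 1) * ((logWeight (k + 1))⁻¹ + (logWeight (N - k))⁻¹) :=
        sum_le_sum hsplit
    _ = 8 / logWeight (N + 1) * (∑ k ∈ range N, (logWeight (k + 1))⁻¹ +
          ∑ k ∈ range N, (logWeight (N - k))⁻¹) := by rw [← mul_sum, sum_add_distrib]
    _ ≤ 8 / logWeight (N + 1) * (10 + 10) := by
        rw [hreflect]; gcongr <;> exact sum_range_inv_logWeight_le N
    _ = 160 / logWeight (N + 1) := by ring

lemma div_le_div_logWeight_of_mul_le {C₀ c s t : ℝ} (hC₀ : 0 ≤ C₀) (hc : 0 < c) (hs : 0 < s)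
    (hst : s ≤ t) (hcs : c * s ≤ t + 1) :
    C₀ / ((t + 1) * log (t + exp 1) ^ 2) ≤ C₀ / c / logWeight s := by
  have hlog := one_le_log_add_exp_one hs.le
  rw [div_div]
  refine div_le_div_of_nonneg_left hC₀ (mul_pos hc (logWeight_pos hs)) ?_
  calc c * logWeight s = (c * s) * log (s + exp 1) ^ 2 := by unfold logWeight; ring
    _ ≤ (t + 1) * log (t + exp 1) ^ 2 := by
        gcongr
        linarith

lemma norm_sum_mul_mul_add_mul_le {R : Type*} [NonUnitalSeminormedRing R] {S L : R}
    {K B : ℕ → R} {M c : ℝ} {a b : ℕ → ℝ} {N : ℕ} (hS : ‖S‖ ≤ M) (hK : ∀ k < N, ‖K k‖ ≤ a k)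
    (hB : ∀ k < N, ‖B k‖ ≤ b k) (hL : ‖L‖ ≤ c) :
    ‖∑ k ∈ range N, S * K k * B k + S * L‖ ≤ M * (∑ k ∈ range N, a k * b k + c) := by
  have hM : 0 ≤ M := (norm_nonneg S).trans hS
  calc ‖∑ k ∈ range N, S * K k * B k + S * L‖
      ≤ ∑ k ∈ range N, ‖S * K k * B k‖ + ‖S * L‖ :=
        (norm_add_le _ _).trans (by gcongr; exact norm_sum_le _ _)
    _ ≤ ∑ k ∈ range N, M * (a k * b k) + M * c := by
        gcongr with k hk
        · have hk := mem_range.mp hk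
          calc ‖S * K k * B k‖ ≤ ‖S‖ * ‖K k‖ * ‖B k‖ := norm_mul₃_le
            _ ≤ M * (a k * b k) := by
              rw [mul_assoc]
              exact mul_le_mul hS (mul_le_mul (hK k hk) (hB k hk) (norm_nonneg _)
                ((norm_nonneg _).trans (hK k hk))) (by positivity) hM
        · exact (norm_mul_le _ _).trans (mul_le_mul hS hL (norm_nonneg _) hM)
    _ = M * (∑ k ∈ range N, a k * b k + c) := by rw [mul_add, mul_sum]

lemma mul_sum_div_logWeight_add_le {M ε C : ℝ} (N : ℕ) (hM : 0 ≤ M) (hε : 0 ≤ ε) (hC : 0 ≤ C)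
    (h : M * ε * (160 * C + 1) ≤ C) :
    M * (∑ k ∈ range N, ε / logWeight (k + 1) * (C / logWeight (N - k)) + ε / logWeight (N + 1))
      ≤ C / logWeight (N + 1) := by
  have hG : 0 < logWeight (N + 1) := logWeight_pos (by positivity)
  have hconv : ∑ k ∈ range N, ε / logWeight (k + 1) * (C / logWeight (N - k))
      ≤ ε * C * (160 / logWeight (N + 1)) := by
    simp_rw [div_mul_div_comm, div_eq_mul_inv (ε * C), ← mul_sum]
    exact mul_le_mul_of_nonneg_left (sum_range_inv_logWeight_mul_le N) (by positivity)
  calc _ ≤ M * (ε * C * (160 / logWeight (N + 1)) + ε / logWeight (N + 1)) := by gcongr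
    _ = M * ε * (160 * C + 1) / logWeight (N + 1) := by ring
    _ ≤ C / logWeight (N + 1) := by gcongr

theorem inductive_step_lemma5_general
    {H : Type*} [NormedAddCommGroup H] [NormedSpace ℂ H]
    (C₀ M C T₁ : ℝ) (hC : 0 < C) :
    ∃ T₀ : ℝ, 2 ≤ T₀ ∧ T₁ < T₀ ∧ ∀ T : ℝ, T₀ ≤ T →
      ∀ (V : ℝ → (H →L[ℂ] H)) (S ψ : H →L[ℂ] H),
        S = ψ * S → S = S * ψ → ‖S‖ ≤ M →
        (∀ t : ℝ, 0 ≤ t →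
          ‖ψ * V t * ψ‖ ≤ C₀ / ((t + 1) * (Real.log (t + Real.exp 1)) ^ 2)) →
        ∀ (N : ℕ), 1 ≤ N → ∀ (B : ℕ → (H →L[ℂ] H)),
          (∀ k : ℕ, k < N → ψ * B k = B k) →
          (∀ k : ℕ, k < N →
            ‖B k‖ ≤ C / (((N : ℝ) - k) * (Real.log ((N : ℝ) - k + Real.exp 1)) ^ 2)) →
          ψ * ((∑ k ∈ Finset.range N, S * ψ * V ((k : ℝ) * T + T - T₁) * ψ * B k) +
                S * ψ * V ((N : ℝ) * T) * ψ)
            = ((∑ k ∈ Finset.range N, S * ψ * V ((k : ℝ) * T + T - T₁) * ψ * B k) +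
                S * ψ * V ((N : ℝ) * T) * ψ) ∧
          ‖(∑ k ∈ Finset.range N, S * ψ * V ((k : ℝ) * T + T - T₁) * ψ * B k) +
              S * ψ * V ((N : ℝ) * T) * ψ‖
            ≤ C / (((N : ℝ) + 1) * (Real.log ((N : ℝ) + 1 + Real.exp 1)) ^ 2) := by
  refine ⟨max (max 2 (2 * T₁)) (2 * M * C₀ * (160 * C + 1) / C),
    le_max_of_le_left (le_max_left _ _), ?_, ?_⟩
  · have := le_max_left (max 2 (2 * T₁)) (2 * M * C₀ * (160 * C + 1) / C)
    linarith [le_max_left 2 (2 * T₁), le_max_right 2 (2 * T₁)]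
  intro T hT V S ψ hψS _ hS hV N hN B _ hB
  simp only [max_le_iff] at hT
  obtain ⟨⟨hT2, hTT₁⟩, hTC⟩ := hT
  -- at `t = 0` the kernel bound reads `‖ψ * V 0 * ψ‖ ≤ C₀`
  have hC₀ : 0 ≤ C₀ := by simpa using (norm_nonneg _).trans (hV 0 le_rfl)
  have hN1 : (1 : ℝ) ≤ N := by exact_mod_cast hN
  refine ⟨by simp only [mul_add, mul_sum, ← mul_assoc, ← hψS], ?_⟩
  have hVk : ∀ k < N, ‖ψ * V (k * T + T - T₁) * ψ‖ ≤ C₀ / (T / 2) / logWeight (k + 1) :=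
    fun k _ => (hV _ (by nlinarith [k.cast_nonneg (α := ℝ)])).trans
      (div_le_div_logWeight_of_mul_le hC₀ (by positivity) (by positivity) (by nlinarith)
        (by nlinarith))
  have hVN : ‖ψ * V (N * T) * ψ‖ ≤ C₀ / (T / 2) / logWeight (N + 1) :=
    (hV _ (by positivity)).trans
      (div_le_div_logWeight_of_mul_le hC₀ (by positivity) (by positivity) (by nlinarith)
        (by nlinarith))
  have hsum := norm_sum_mul_mul_add_mul_le (b := fun k => C / logWeight (N - k)) hS hVk hB hVN
  simp only [mul_assoc] at hsum ⊢
  refine hsum.trans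
    (mul_sum_div_logWeight_add_le N ((norm_nonneg S).trans hS) (by positivity) hC.le ?_)
  rw [div_le_iff₀ hC] at hTC
  rw [mul_div_assoc', div_mul_eq_mul_div, div_le_iff₀ (by positivity)]
  linarith

/-- Inductive step of Lemma 5: for `T` large enough (depending only on the
constants `C₀, M, C` and on `T₁`), if each `B_N^k` satisfies `ψ B_N^k = B_N^k`
and `‖B_N^k‖ ≤ C/((N-k)·ln²(N-k+e))`, then
`B⁰_{N+1} = ∑_{k<N} Sψ V(kT+T-T₁)ψ B_N^k + Sψ V(NT)ψ` satisfies
`ψ B⁰_{N+1} = B⁰_{N+1}` and `‖B⁰_{N+1}‖ ≤ C/((N+1)·ln²(N+1+e))`. -/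
theorem inductive_step_lemma5
    {H : Type*} [NormedAddCommGroup H] [NormedSpace ℂ H] [CompleteSpace H]
    (C₀ M C T₁ : ℝ) (hC₀ : 0 < C₀) (hM : 0 < M) (hC : 0 < C) (hT₁ : 0 < T₁) :
    ∃ T₀ : ℝ, 2 ≤ T₀ ∧ T₁ < T₀ ∧ ∀ T : ℝ, T₀ ≤ T →
      ∀ (V : ℝ → (H →L[ℂ] H)) (S ψ : H →L[ℂ] H),
        S = ψ * S → S = S * ψ → ‖S‖ ≤ M →
        (∀ t : ℝ, 0 ≤ t →
          ‖ψ * V t * ψ‖ ≤ C₀ / ((t + 1) * (Real.log (t + Real.exp 1)) ^ 2)) →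
        ∀ (N : ℕ), 1 ≤ N → ∀ (B : ℕ → (H →L[ℂ] H)),
          (∀ k : ℕ, k < N → ψ * B k = B k) →
          (∀ k : ℕ, k < N →
            ‖B k‖ ≤ C / (((N : ℝ) - k) * (Real.log ((N : ℝ) - k + Real.exp 1)) ^ 2)) →
          ψ * ((∑ k ∈ Finset.range N, S * ψ * V ((k : ℝ) * T + T - T₁) * ψ * B k) +
                S * ψ * V ((N : ℝ) * T) * ψ)
            = ((∑ k ∈ Finset.range N, S * ψ * V ((k : ℝ) * T + T - T₁) * ψ * B k) +
                S * ψ * V ((N : ℝ) * T) * ψ) ∧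
          ‖(∑ k ∈ Finset.range N, S * ψ * V ((k : ℝ) * T + T - T₁) * ψ * B k) +
              S * ψ * V ((N : ℝ) * T) * ψ‖
            ≤ C / (((N : ℝ) + 1) * (Real.log ((N : ℝ) + 1 + Real.exp 1)) ^ 2) :=
  inductive_step_lemma5_general C₀ M C T₁ hC
end
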